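/- arXiv:1907.03440 — 11 statements merged into one kernel-verified Lean document; each statement's English description precedes it below -/
import Mathlib

section
/- Let S be as in the previous construction (disjoint union over a linear order I). Then S is cancellative: x ∨ y = x ∨ z and x ∧ y = x ∧ z imply y = z; and x ∨ z = y ∨ z and x ∧ z = y ∧ z imply x = y. -/
def sMeet {I : Type*} [LinearOrder I] {A : I → Type*} (x y : Σ i, A i) : Σ i, A i :=
  if x.1 < y.1 then x else y

def sJoin {I : Type*} [LinearOrder I] {A : I → Type*} (x y : Σ i, A i) : Σ i, A i :=
  if x.1 < y.1 then y else x

theorem sigma_skew_cancellative {I : Type*} [LinearOrder I] {A : I → Type*}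
    (hne : ∀ i, Nonempty (A i)) :
    (∀ x y z : Σ i, A i, sJoin x y = sJoin x z → sMeet x y = sMeet x z → y = z) ∧
    (∀ x y z : Σ i, A i, sJoin x z = sJoin y z → sMeet x z = sMeet y z → x = y) := by
  constructor <;>
  · intro x y z hj hm
    simp only [sJoin, sMeet] at hj hm
    split_ifs at hj hm <;> first | assumption | simp_all
end

section
/- A skew lattice S is a strong distributive solution of the Yang–Baxter equation (i.e. the map r(x,y) = (x ∧ y, x ∨ y) satisfies the braid relation (r × id)(id × r)(r × id) = (id × r)(r × id)(id × r)) if and only if S satisfies the three identities: (x ∧ y) ∧ ((x ∨ y) ∧ z) = x ∧ (y ∧ z), (x ∧ y) ∨ ((x ∨ y) ∧ z) = (x ∨ (y ∧ z)) ∧ (y ∨ z), and (x ∨ y) ∨ z = (x ∨ (y ∧ z)) ∨ (y ∨ z). -/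
def leftMap {α : Type*} (r : α × α → α × α) : α × α × α → α × α × α :=
  fun p => ((r (p.1, p.2.1)).1, (r (p.1, p.2.1)).2, p.2.2)

def rightMap {α : Type*} (r : α × α → α × α) : α × α × α → α × α × α :=
  fun p => (p.1, r p.2)

def IsBraid {α : Type*} (r : α × α → α × α) : Prop :=
  leftMap r ∘ rightMap r ∘ leftMap r = rightMap r ∘ leftMap r ∘ rightMap r

theorem strong_distributive_solution_iff {α : Type*} (m j : α → α → α)
    (mi : ∀ x : α, m x x = x)
    (ji : ∀ x : α, j x x = x)
    (ma : ∀ x y z : α, m (m x y) z = m x (m y z))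
    (ja : ∀ x y z : α, j (j x y) z = j x (j y z))
    (ab1 : ∀ x y : α, m x (j x y) = x)
    (ab2 : ∀ x y : α, j x (m x y) = x)
    (ab3 : ∀ x y : α, j (m x y) y = y)
    (ab4 : ∀ x y : α, m (j x y) y = y) :
    IsBraid (fun p : α × α => (m p.1 p.2, j p.1 p.2)) ↔
    ((∀ x y z : α, m (m x y) (m (j x y) z) = m x (m y z)) ∧
     (∀ x y z : α, j (m x y) (m (j x y) z) = m (j x (m y z)) (j y z)) ∧
     (∀ x y z : α, j (j x y) z = j (j x (m y z)) (j y z))) := by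
  constructor
  · intro h
    refine ⟨fun x y z => ?_, fun x y z => ?_, fun x y z => ?_⟩
    · exact congrArg (·.1) (congrFun h (x, y, z))
    · exact congrArg (·.2.1) (congrFun h (x, y, z))
    · exact congrArg (·.2.2) (congrFun h (x, y, z))
  · rintro ⟨h1, h2, h3⟩
    funext p
    obtain ⟨x, y, z⟩ := p
    simp only [IsBraid, leftMap, rightMap, Function.comp_apply, Prod.mk.injEq]
    exact ⟨h1 x y z, h2 x y z, h3 x y z⟩
end

section
/- Let S be a skew lattice that is both strongly distributive and co-strongly distributive. Then the map r(x, y) = (x ∧ y, x ∨ y) on S × S satisfies the Yang–Baxter braid relation (r × id)(id × r)(r × id) = (id × r)(r × id)(id × r). -/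
structure SkewDL (α : Type*) where
  m : α → α → α
  j : α → α → α
  mi : ∀ x : α, m x x = x
  ji : ∀ x : α, j x x = x
  ma : ∀ x y z : α, m (m x y) z = m x (m y z)
  ja : ∀ x y z : α, j (j x y) z = j x (j y z)
  ab1 : ∀ x y : α, m x (j x y) = x
  ab2 : ∀ x y : α, j x (m x y) = x
  ab3 : ∀ x y : α, j (m x y) y = y
  ab4 : ∀ x y : α, m (j x y) y = y
  sd1 : ∀ x y z : α, m (j x y) z = j (m x z) (m y z)
  sd2 : ∀ x y z : α, m x (j y z) = j (m x y) (m x z)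
  csd1 : ∀ x y z : α, j (m x y) z = m (j x z) (j y z)
  csd2 : ∀ x y z : α, j x (m y z) = m (j x y) (j x z)

namespace SkewDL

variable {α : Type*} (S : SkewDL α)

def dual : SkewDL α :=
  ⟨S.j, S.m, S.ji, S.mi, S.ja, S.ma, S.ab2, S.ab1, S.ab4, S.ab3, S.csd1, S.csd2, S.sd1, S.sd2⟩

lemma star (x y z : α) : S.m x z = S.j (S.m x (S.m y z)) (S.m x z) := by
  conv_lhs => rw [← S.ab4 y z]
  rw [← S.ma x (S.j y z) z, S.sd2 x y z, S.sd1 (S.m x y) (S.m x z) z,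
    S.ma x y z, S.ma x z z, S.mi z]

lemma star' (x y z : α) : S.m x z = S.j (S.m x z) (S.m x (S.m y z)) := by
  conv_lhs => rw [← S.ab1 x y]
  rw [S.ma x (S.j x y) z, S.sd1 x y z, S.sd2 x (S.m x z) (S.m y z),
    ← S.ma x x z, S.mi x]

lemma N2 (x y z : α) : S.m (S.m x z) (S.m x (S.m y z)) = S.m x (S.m y z) := by
  have h := S.ab4 (S.m x z) (S.m x (S.m y z))
  rwa [← S.star' x y z] at h

lemma mnorm (x y z : α) : S.m (S.m x y) (S.m x z) = S.m (S.m x y) z := by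
  have h1 : S.m (S.m x y) z = S.j (S.m (S.m x y) (S.m x z)) (S.m (S.m x y) z) :=
    S.star (S.m x y) x z
  have h2 : S.m (S.m (S.m x y) (S.m x z)) (S.m (S.m x y) z) = S.m (S.m x y) z := by
    rw [S.ma (S.m x y) (S.m x z) (S.m (S.m x y) z), S.ma x y z, S.N2 x y z,
      ← S.ma x y z, ← S.ma (S.m x y) (S.m x y) z, S.mi (S.m x y)]
  have h3 := S.ab2 (S.m (S.m x y) (S.m x z)) (S.m (S.m x y) z)
  rw [h2] at h3
  rw [← h1] at h3
  exact h3.symm ▸ rfl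

lemma P (x y z : α) : S.m (S.m x z) (S.m y z) = S.m x (S.m y z) := by
  have hab : S.m (S.m x (S.m y z)) (S.m (S.m x z) (S.m y z)) = S.m x (S.m y z) := by
    rw [S.ma x z (S.m y z), S.mnorm x (S.m y z) (S.m z (S.m y z)),
      S.ma x (S.m y z) (S.m z (S.m y z)), ← S.ma (S.m y z) z (S.m y z),
      S.ma y z z, S.mi z, S.mi (S.m y z)]
  have h3 := S.ab3 (S.m x (S.m y z)) (S.m (S.m x z) (S.m y z))
  rw [hab] at h3
  have h4 : S.j (S.m x (S.m y z)) (S.m (S.m x z) (S.m y z)) = S.m x (S.m y z) := by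
    rw [← S.ma x y z, ← S.ma (S.m x z) y z, ← S.sd1 (S.m x y) (S.m (S.m x z) y) z,
      ← S.sd1 x (S.m x z) y, S.ab2 x z]
  exact h3.symm.trans h4

lemma norm (x y z w : α) : S.m x (S.m y (S.m z w)) = S.m x (S.m z (S.m y w)) := by
  rw [← S.P x y (S.m z w), S.ma x (S.m z w) (S.m y (S.m z w)),
    S.ma z w (S.m y (S.m z w)), ← S.ma w y (S.m z w), ← S.ma z (S.m w y) (S.m z w),
    S.mnorm z (S.m w y) w, S.ma z (S.m w y) w, S.ma w y w, ← S.ma z w (S.m y w),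
    S.P z y w]

lemma conorm (x y z w : α) : S.j x (S.j y (S.j z w)) = S.j x (S.j z (S.j y w)) :=
  S.dual.norm x y z w

lemma swap (a b c d : α) : S.j a (S.j b (S.j c d)) = S.j a (S.j c (S.j b d)) :=
  S.conorm a b c d

lemma dup (a d : α) : S.j a d = S.j a (S.j a d) := by
  rw [← S.ja a a d, S.ji a]

lemma dupr (a b : α) : S.j a b = S.j a (S.j b b) := by
  rw [S.ji b]

lemma absorb2 (u t d : α) : S.j u (S.j (S.m u t) d) = S.j u d := by
  rw [← S.ja u (S.m u t) d, S.ab2 u t]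

lemma absorb3 (t v d : α) : S.j (S.m t v) (S.j v d) = S.j v d := by
  rw [← S.ja (S.m t v) v d, S.ab3 t v]

lemma meet_join (x y : α) : S.m (S.m x y) (S.j x y) = S.m (S.m x y) x := by
  rw [S.sd2 (S.m x y) x y]
  have h : S.m (S.m x y) y = S.m (S.m (S.m x y) x) y := by
    rw [S.ma (S.m x y) x y, S.mi (S.m x y), S.ma x y y, S.mi y]
  rw [h]
  exact S.ab2 (S.m (S.m x y) x) y

lemma braid1 (x y z : α) :
    S.m (S.m x y) (S.m (S.j x y) z) = S.m x (S.m y z) := by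
  rw [← S.ma (S.m x y) (S.j x y) z, S.meet_join x y, S.ma (S.m x y) x z,
    S.mnorm x y z, S.ma x y z]

lemma braid3 (x y z : α) :
    S.j (S.j x y) z = S.j (S.j x (S.m y z)) (S.j y z) := by
  rw [S.ja x (S.m y z) (S.j y z), S.csd1 y z (S.j y z), ← S.ja y y z, S.ji y,
    S.sd2 (S.j y z) z (S.j y z), S.ab4 y z, S.mi (S.j y z),
    S.conorm x z y z, S.ji z, S.ja x y z]

lemma reduce (u v w q y' : α) :
    S.j u (S.j (S.m q u) (S.j v (S.j (S.m q w)
      (S.j (S.m v y') (S.j (S.m w y') (S.j v w)))))) = S.j u (S.j v w) := by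
  rw [S.dup u]
  rw [S.swap u u (S.m q u)]
  rw [S.absorb3 q u]
  rw [← S.dup u]
  rw [S.swap v (S.m q w) (S.m v y')]
  rw [S.absorb2 v y']
  rw [S.swap v (S.m q w) (S.m w y')]
  rw [S.swap (S.m w y') (S.m q w) v]
  rw [S.ab3 q w]
  rw [S.swap v (S.m w y') v]
  rw [← S.dup v]
  rw [S.dupr (S.m w y') w]
  rw [S.swap v (S.m w y') w]
  rw [S.absorb2 w y']
  rw [S.ji w]

lemma key (x y z : α) :
    S.m (S.j x (S.m y z)) (S.j y z) = S.j (S.m x y) (S.j (S.m x z) (S.m y z)) := by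
  rw [S.csd2 x y z]
  rw [S.ma (S.j x y) (S.j x z) (S.j y z)]
  rw [S.sd1 x z (S.j y z)]
  rw [S.sd2 x y z]
  rw [S.sd2 z y z]
  rw [S.mi z]
  rw [S.ja (S.m x y) (S.m x z) (S.j (S.m z y) z)]
  rw [S.sd2 (S.j x y) (S.m x y) (S.j (S.m x z) (S.j (S.m z y) z))]
  rw [S.sd2 (S.j x y) (S.m x z) (S.j (S.m z y) z)]
  rw [S.sd2 (S.j x y) (S.m z y) z]
  rw [S.sd1 x y (S.m x y)]
  rw [S.sd1 x y (S.m x z)]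
  rw [S.sd1 x y (S.m z y)]
  rw [S.sd1 x y z]
  rw [← S.ma x x y, S.mi x]
  rw [← S.ma x x z, S.mi x]
  rw [S.ja (S.m x y) (S.m y (S.m x y))]
  rw [S.ja (S.m x z) (S.m y (S.m x z))]
  rw [S.ja (S.m x (S.m z y)) (S.m y (S.m z y))]
  rw [show S.m y (S.m x y) = S.m (S.m y x) (S.m x y) from by
    rw [S.ma y x (S.m x y), ← S.ma x x y, S.mi x]]
  rw [show S.m y (S.m x z) = S.m (S.m y x) (S.m y z) from by
    rw [S.mnorm y x z, S.ma y x z]]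
  rw [← S.ma x z y]
  rw [← S.ma y z y]
  exact S.reduce (S.m x y) (S.m x z) (S.m y z) (S.m y x) y

lemma braid2 (x y z : α) :
    S.j (S.m x y) (S.m (S.j x y) z) = S.m (S.j x (S.m y z)) (S.j y z) := by
  rw [S.sd1 x y z, S.key x y z]

end SkewDL

theorem strongly_costrongly_braid {α : Type*} (m j : α → α → α)
    (mi : ∀ x : α, m x x = x)
    (ji : ∀ x : α, j x x = x)
    (ma : ∀ x y z : α, m (m x y) z = m x (m y z))
    (ja : ∀ x y z : α, j (j x y) z = j x (j y z))
    (ab1 : ∀ x y : α, m x (j x y) = x)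
    (ab2 : ∀ x y : α, j x (m x y) = x)
    (ab3 : ∀ x y : α, j (m x y) y = y)
    (ab4 : ∀ x y : α, m (j x y) y = y)
    (sd1 : ∀ x y z : α, m (j x y) z = j (m x z) (m y z))
    (sd2 : ∀ x y z : α, m x (j y z) = j (m x y) (m x z))
    (csd1 : ∀ x y z : α, j (m x y) z = m (j x z) (j y z))
    (csd2 : ∀ x y z : α, j x (m y z) = m (j x y) (j x z)) :
    IsBraid (fun p : α × α => (m p.1 p.2, j p.1 p.2)) := by
  set S : SkewDL α := ⟨m, j, mi, ji, ma, ja, ab1, ab2, ab3, ab4, sd1, sd2, csd1, csd2⟩ with hS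
  unfold IsBraid
  funext p
  obtain ⟨x, y, z⟩ := p
  simp only [leftMap, rightMap, Function.comp_apply]
  refine Prod.ext ?_ (Prod.ext ?_ ?_)
  · exact S.braid1 x y z
  · exact S.braid2 x y z
  · exact S.braid3 x y z
end

section
/- Let S be a skew lattice that is both strongly distributive and co-strongly distributive, and let r(x, y) = (x ∧ y, x ∨ y). Then r³ = r, i.e. ((x ∧ y) ∧ (x ∨ y)) ∧ ((x ∧ y) ∨ (x ∨ y)) = x ∧ y and ((x ∧ y) ∧ (x ∨ y)) ∨ ((x ∧ y) ∨ (x ∨ y)) = x ∨ y for all x, y. -/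
theorem strongly_costrongly_cubic {α : Type*} (m j : α → α → α)
    (mi : ∀ x : α, m x x = x)
    (ji : ∀ x : α, j x x = x)
    (ma : ∀ x y z : α, m (m x y) z = m x (m y z))
    (ja : ∀ x y z : α, j (j x y) z = j x (j y z))
    (ab1 : ∀ x y : α, m x (j x y) = x)
    (ab2 : ∀ x y : α, j x (m x y) = x)
    (ab3 : ∀ x y : α, j (m x y) y = y)
    (ab4 : ∀ x y : α, m (j x y) y = y)
    (sd1 : ∀ x y z : α, m (j x y) z = j (m x z) (m y z))
    (sd2 : ∀ x y z : α, m x (j y z) = j (m x y) (m x z))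
    (csd1 : ∀ x y z : α, j (m x y) z = m (j x z) (j y z))
    (csd2 : ∀ x y z : α, j x (m y z) = m (j x y) (j x z)) :
    ∀ x y : α, m (m (m x y) (j x y)) (j (m x y) (j x y)) = m x y ∧
      j (m (m x y) (j x y)) (j (m x y) (j x y)) = j x y := by
  intro x y
  exact ⟨(((((((((congrArg (m (m (m x y) (j x y))) (ja (m x y) x y).symm).trans (ma (m x y) (j x y) (j (j (m x y) x) y))).trans (congrArg (m (m x y)) (csd1 x (j (m x y) x) y).symm)).trans (congrArg (m (m x y)) (congrFun (congrArg j (sd2 x (m x y) x)) y))).trans (congrArg (m (m x y)) (congrFun (congrArg j (congrArg (j (m x (m x y))) (mi x))) y))).trans (congrArg (m (m x y)) (congrFun (congrArg j (congrFun (congrArg j (ma x x y).symm) x)) y))).trans (congrArg (m (m x y)) (congrFun (congrArg j (congrFun (congrArg j (congrFun (congrArg m (mi x)) y)) x)) y))).trans (congrArg (m (m x y)) (ja (m x y) x y))).trans (ab1 (m x y) (j x y))), (((((((((((((ja (m (m x y) (j x y)) (m x y) (j x y)).symm.trans (ja (j (m (m x y) (j x y)) (m x y)) x y).symm).trans (congrFun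 (congrArg j (congrFun (congrArg j (congrFun (congrArg j (ma x y (j x y))) (m x y))) x)) y)).trans (congrFun (congrArg j (congrFun (congrArg j (sd2 x (m y (j x y)) y).symm) x)) y)).trans (congrFun (congrArg j (congrFun (congrArg j (congrArg (m x) (congrFun (congrArg j (sd2 y x y)) y))) x)) y)).trans (congrFun (congrArg j (congrFun (congrArg j (congrArg (m x) (congrFun (congrArg j (congrArg (j (m y x)) (mi y))) y))) x)) y)).trans (congrFun (congrArg j (congrFun (congrArg j (congrArg (m x) (ja (m y x) y y))) x)) y)).trans (congrFun (congrArg j (congrFun (congrArg j (congrArg (m x) (congrArg (j (m y x)) (ji y)))) x)) y)).trans (congrFun (congrArg j (congrFun (congrArg j (congrArg (m x) (congrArg (j (m y x)) (mi y).symm))) x)) y)).trans (congrFun (congrArg j (congrFun (congrArg j (congrArg (m x) (sd2 y x y).symm)) x)) y)).trans (congrFun (congrArg j (congrFun (congrArg j (ma x y (j x y)).symm) x)) y)).trans (ja (m (m x y) (j x y)) x y)).trans (ab3 (m x y) (j x y)))⟩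
end

section
/- The 3-element right handed skew lattice 3^{R,0} with elements {0,1,2}, meet given by 0 ∧ x = x ∧ 0 = 0, 1 ∧ 1 = 1, 1 ∧ 2 = 2, 2 ∧ 1 = 1, 2 ∧ 2 = 2, and join given by 0 ∨ x = x, 1 ∨ y = 1 and 2 ∨ y = 2 for y ∈ {1,2}, 1 ∨ 0 = 1, 2 ∨ 0 = 2, is a skew lattice that does not satisfy the identity (x ∧ y) ∨ ((x ∨ y) ∧ z) = (x ∨ (y ∧ z)) ∧ (y ∨ z); hence the map r(x,y) = (x ∧ y, x ∨ y) on it does not satisfy the Yang–Baxter equation. -/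
def m3 : Fin 3 → Fin 3 → Fin 3 := ![![0, 0, 0], ![0, 1, 2], ![0, 1, 2]]

def j3 : Fin 3 → Fin 3 → Fin 3 := ![![0, 1, 2], ![1, 1, 1], ![2, 2, 2]]

theorem three_R_zero_not_strong_solution :
    (∀ x, m3 x x = x) ∧ (∀ x, j3 x x = x) ∧
    (∀ x y z, m3 (m3 x y) z = m3 x (m3 y z)) ∧
    (∀ x y z, j3 (j3 x y) z = j3 x (j3 y z)) ∧
    (∀ x y, m3 x (j3 x y) = x) ∧ (∀ x y, j3 x (m3 x y) = x) ∧
    (∀ x y, j3 (m3 x y) y = y) ∧ (∀ x y, m3 (j3 x y) y = y) ∧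
    ¬ (∀ x y z, j3 (m3 x y) (m3 (j3 x y) z) = m3 (j3 x (m3 y z)) (j3 y z)) ∧
    ¬ IsBraid (fun p : Fin 3 × Fin 3 => (m3 p.1 p.2, j3 p.1 p.2)) := by
  refine ⟨by decide, by decide, by decide, by decide, by decide, by decide,
    by decide, by decide, ?_, ?_⟩
  · intro h
    have := h 0 1 2
    exact absurd this (by decide)
  · intro h
    have := congrFun h (0, 1, 2)
    simp [leftMap, rightMap, m3, j3] at this
end

section
/- Let S be a left handed skew lattice. Then S satisfies the identities (x ∧ y) ∧ ((x ∨ y) ∧ z) = x ∧ (y ∧ z) and x ∨ y ∨ z = x ∨ (y ∧ z) ∨ y ∨ z. -/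
theorem left_handed_two_identities {α : Type*} (m j : α → α → α)
    (mi : ∀ x : α, m x x = x)
    (ji : ∀ x : α, j x x = x)
    (ma : ∀ x y z : α, m (m x y) z = m x (m y z))
    (ja : ∀ x y z : α, j (j x y) z = j x (j y z))
    (ab1 : ∀ x y : α, m x (j x y) = x)
    (ab2 : ∀ x y : α, j x (m x y) = x)
    (ab3 : ∀ x y : α, j (m x y) y = y)
    (ab4 : ∀ x y : α, m (j x y) y = y)
    (lh : ∀ x y : α, m (m x y) x = m x y)
    (lh' : ∀ x y : α, j (j x y) x = j y x) :
    (∀ x y z : α, m (m x y) (m (j x y) z) = m x (m y z)) ∧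
    (∀ x y z : α, j (j x y) z = j (j (j x (m y z)) y) z) := by
  have key1 : ∀ x y : α, m (m x y) (j x y) = m x y := by
    intro x y
    calc m (m x y) (j x y) = m (m (m x y) x) (j x y) := by rw [lh]
      _ = m (m x y) (m x (j x y)) := by rw [ma]
      _ = m (m x y) x := by rw [ab1]
      _ = m x y := lh x y
  have key2 : ∀ y z : α, j (m y z) (j y z) = j y z := by
    intro y z
    calc j (m y z) (j y z) = j (m y z) (j y (j (m y z) z)) := by rw [ab3]
      _ = j (j (j (m y z) y) (m y z)) z := by rw [ja, ja]
      _ = j (j y (m y z)) z := by rw [lh']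
      _ = j y z := by rw [ab2]
  constructor
  · intro x y z
    calc m (m x y) (m (j x y) z) = m (m (m x y) (j x y)) z := (ma _ _ _).symm
      _ = m (m x y) z := by rw [key1]
      _ = m x (m y z) := ma x y z
  · intro x y z
    calc j (j x y) z = j x (j y z) := ja x y z
      _ = j x (j (m y z) (j y z)) := by rw [key2]
      _ = j (j (j x (m y z)) y) z := by rw [ja, ja]
end

section
/- Let S be a left handed skew lattice that is strongly distributive (satisfying (x ∨ y) ∧ z = (x ∧ z) ∨ (y ∧ z) and x ∧ (y ∨ z) = (x ∧ y) ∨ (x ∧ z)). Then S satisfies (x ∧ y) ∨ ((x ∨ y) ∧ z) = (x ∨ (y ∧ z)) ∧ (y ∨ z), and hence the map r(x,y) = (x ∧ y, x ∨ y) satisfies the Yang–Baxter equation on S. -/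
theorem left_handed_strongly_distributive_solution {α : Type*} (m j : α → α → α)
    (mi : ∀ x : α, m x x = x)
    (ji : ∀ x : α, j x x = x)
    (ma : ∀ x y z : α, m (m x y) z = m x (m y z))
    (ja : ∀ x y z : α, j (j x y) z = j x (j y z))
    (ab1 : ∀ x y : α, m x (j x y) = x)
    (ab2 : ∀ x y : α, j x (m x y) = x)
    (ab3 : ∀ x y : α, j (m x y) y = y)
    (ab4 : ∀ x y : α, m (j x y) y = y)
    (lh : ∀ x y : α, m (m x y) x = m x y)
    (lh' : ∀ x y : α, j (j x y) x = j y x)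
    (sd1 : ∀ x y z : α, m (j x y) z = j (m x z) (m y z))
    (sd2 : ∀ x y z : α, m x (j y z) = j (m x y) (m x z)) :
    (∀ x y z : α, j (m x y) (m (j x y) z) = m (j x (m y z)) (j y z)) ∧
    IsBraid (fun p : α × α => (m p.1 p.2, j p.1 p.2)) := by
  -- key lemma: (a ∧ b) ∨ a = a
  have lem1 : ∀ a b : α, j (m a b) a = a := by
    intro a b
    conv_lhs => rw [← lh a b]
    exact ab3 _ _
  -- key lemma: b ∧ (a ∨ b) = b
  have lem2 : ∀ a b : α, m b (j a b) = b := by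
    intro a b
    rw [sd2, mi, lem1]
  have main : ∀ x y z : α, j (m x y) (m (j x y) z) = m (j x (m y z)) (j y z) := by
    intro x y z
    rw [sd1, sd1, sd2, ja, ma, lem2]
  refine ⟨main, ?_⟩
  funext p
  obtain ⟨x, y, z⟩ := p
  simp only [leftMap, rightMap, Function.comp, Prod.mk.injEq]
  refine ⟨?_, ?_, ?_⟩
  · -- (x∧y) ∧ ((x∨y) ∧ z) = x ∧ (y∧z)
    rw [← ma, ← ma, ma x y (j x y), lem2, ma]
  · exact main x y z
  · -- (x∨y) ∨ z = (x ∨ (y∧z)) ∨ (y∨z)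
    rw [ja, ja, ← ja (m y z) y z, lem1]
end

section
/- Let S be a skew lattice such that the solution map r(x,y) = (x ∧ y, x ∨ y) is left non-degenerate, i.e. for each x the map t ↦ x ∧ t is bijective (surjectivity suffices), and assume S satisfies the braid relation for r. Then x ∧ y = y and x ∨ y = x for all x, y ∈ S. -/
theorem left_nondegenerate_strong_solution {α : Type*} (m j : α → α → α)
    (mi : ∀ x : α, m x x = x)
    (ji : ∀ x : α, j x x = x)
    (ma : ∀ x y z : α, m (m x y) z = m x (m y z))
    (ja : ∀ x y z : α, j (j x y) z = j x (j y z))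
    (ab1 : ∀ x y : α, m x (j x y) = x)
    (ab2 : ∀ x y : α, j x (m x y) = x)
    (ab3 : ∀ x y : α, j (m x y) y = y)
    (ab4 : ∀ x y : α, m (j x y) y = y)
    (hsurj : ∀ x y : α, ∃ t : α, m x t = y)
    (hbraid : IsBraid (fun p : α × α => (m p.1 p.2, j p.1 p.2))) :
    ∀ x y : α, m x y = y ∧ j x y = x := by
  intro x y
  obtain ⟨t, ht⟩ := hsurj x y
  have hm : m x y = y := by rw [← ht, ← ma, mi]
  exact ⟨hm, by rw [← hm, ab2]⟩
end

section
/- Let S be any skew lattice. Then the map r_L(x, y) = (x ∧ y, y ∨ x) on S × S is idempotent: r_L ∘ r_L = r_L. -/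
theorem rL_idempotent {α : Type*} (m j : α → α → α)
    (mi : ∀ x : α, m x x = x)
    (ji : ∀ x : α, j x x = x)
    (ma : ∀ x y z : α, m (m x y) z = m x (m y z))
    (ja : ∀ x y z : α, j (j x y) z = j x (j y z))
    (ab1 : ∀ x y : α, m x (j x y) = x)
    (ab2 : ∀ x y : α, j x (m x y) = x)
    (ab3 : ∀ x y : α, j (m x y) y = y)
    (ab4 : ∀ x y : α, m (j x y) y = y) :
    (fun p : α × α => (m p.1 p.2, j p.2 p.1)) ∘ (fun p : α × α => (m p.1 p.2, j p.2 p.1)) = (fun p : α × α => (m p.1 p.2, j p.2 p.1)) := by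
  funext p
  simp only [Function.comp]
  refine Prod.ext ?_ ?_ <;> simp only
  · rw [ma, ab1]
  · rw [ja, ab2]
end

section
/- A skew lattice S satisfies the Yang–Baxter braid relation for the map r_L(x, y) = (x ∧ y, y ∨ x) if and only if S satisfies the single identity ((y ∨ x) ∧ z) ∨ (x ∧ y) = ((y ∧ z) ∨ x) ∧ (z ∨ y) for all x, y, z. -/
theorem left_distributive_solution_iff {α : Type*} (m j : α → α → α)
    (mi : ∀ x : α, m x x = x)
    (ji : ∀ x : α, j x x = x)
    (ma : ∀ x y z : α, m (m x y) z = m x (m y z))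
    (ja : ∀ x y z : α, j (j x y) z = j x (j y z))
    (ab1 : ∀ x y : α, m x (j x y) = x)
    (ab2 : ∀ x y : α, j x (m x y) = x)
    (ab3 : ∀ x y : α, j (m x y) y = y)
    (ab4 : ∀ x y : α, m (j x y) y = y) :
    IsBraid (fun p : α × α => (m p.1 p.2, j p.2 p.1)) ↔
    ∀ x y z : α, j (m (j y x) z) (m x y) = m (j (m y z) x) (j z y) := by
  constructor
  · intro h x y z
    have h' := congrFun h (x, y, z)
    simpa [leftMap, rightMap, IsBraid, Function.comp] using congrArg (fun t => t.2.1) h'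
  · intro h
    funext p
    obtain ⟨x, y, z⟩ := p
    simp only [IsBraid, leftMap, rightMap, Function.comp]
    refine Prod.ext ?_ (Prod.ext ?_ ?_) <;> dsimp only
    · rw [ma, ← ma y, ab1]
    · exact h x y z
    · rw [ja, ← ja y, ab2]
end

section
/- Let S be a strongly distributive skew lattice (satisfying (x ∨ y) ∧ z = (x ∧ z) ∨ (y ∧ z) and x ∧ (y ∨ z) = (x ∧ y) ∨ (x ∧ z)). Then S satisfies ((y ∨ x) ∧ z) ∨ (x ∧ y) = ((y ∧ z) ∨ x) ∧ (z ∨ y) for all x, y, z; hence the map r_L(x,y) = (x ∧ y, y ∨ x) satisfies the Yang–Baxter equation on S. -/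
theorem strongly_distributive_left_solution {α : Type*} (m j : α → α → α)
    (mi : ∀ x : α, m x x = x)
    (ji : ∀ x : α, j x x = x)
    (ma : ∀ x y z : α, m (m x y) z = m x (m y z))
    (ja : ∀ x y z : α, j (j x y) z = j x (j y z))
    (ab1 : ∀ x y : α, m x (j x y) = x)
    (ab2 : ∀ x y : α, j x (m x y) = x)
    (ab3 : ∀ x y : α, j (m x y) y = y)
    (ab4 : ∀ x y : α, m (j x y) y = y)
    (sd1 : ∀ x y z : α, m (j x y) z = j (m x z) (m y z))
    (sd2 : ∀ x y z : α, m x (j y z) = j (m x y) (m x z)) :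
    (∀ x y z : α, j (m (j y x) z) (m x y) = m (j (m y z) x) (j z y)) ∧
    IsBraid (fun p : α × α => (m p.1 p.2, j p.2 p.1)) := by
  have key : ∀ x y z : α, j (m (j y x) z) (m x y) = m (j (m y z) x) (j z y) := by
    intro x y z
    have h3 : m (m y z) (j z y) = m y z := by rw [ma, ab1]
    rw [sd1 y x z, sd1 (m y z) x (j z y), h3, sd2, ← ja]
  refine ⟨key, ?_⟩
  funext p
  obtain ⟨x, y, z⟩ := p
  simp only [Function.comp, leftMap, rightMap, Prod.mk.injEq]
  refine ⟨?_, key x y z, ?_⟩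
  · rw [ma, ← ma y, ab1]
  · have h : j (j z y) (m y z) = j z y := by rw [ja, ab2]
    rw [← ja, ← ja, h]
end
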